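/- Let (a,b,c,q,r) satisfy the first negative AKNS flow q_s = b/2, r_s = c/2, b_y = 2aq, c_y = 2ar, a_y + br + cq = 0 with a² + bc = 1, and let f(y,s) be a smooth function satisfying 2a = b e^{-f} - c e^{f}, with b e^{-f} + c e^{f} never zero. Then f_y = q e^{-f} + r e^{f}. -/

import Mathlib

noncomputable def pdy (f : ℝ → ℝ → ℝ) : ℝ → ℝ → ℝ := fun y s => deriv (fun y' => f y' s) y

noncomputable def pds (f : ℝ → ℝ → ℝ) : ℝ → ℝ → ℝ := fun y s => deriv (fun s' => f y s') s

def Smooth2 (f : ℝ → ℝ → ℝ) : Prop := ContDiff ℝ (⊤ : ℕ∞) (fun p : ℝ × ℝ => f p.1 p.2)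

/-- The first negative flow of the AKNS hierarchy:
`q_s = b/2`, `r_s = c/2`, `b_y = 2aq`, `c_y = 2ar`, `a_y + br + cq = 0`. -/
def AKNSNegFlow (a b c q r : ℝ → ℝ → ℝ) : Prop :=
  (∀ y s, pds q y s = (1/2) * b y s) ∧
  (∀ y s, pds r y s = (1/2) * c y s) ∧
  (∀ y s, pdy b y s = 2 * a y s * q y s) ∧
  (∀ y s, pdy c y s = 2 * a y s * r y s) ∧
  (∀ y s, pdy a y s + b y s * r y s + c y s * q y s = 0)


lemma hasDerivAtY (g : ℝ → ℝ → ℝ) (hg : Smooth2 g) (y s : ℝ) :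
    HasDerivAt (fun y' => g y' s) (pdy g y s) y := by
  have hdiff : Differentiable ℝ (fun y' : ℝ => g y' s) := by
    have h1 : Differentiable ℝ (fun p : ℝ × ℝ => g p.1 p.2) := hg.differentiable (by simp)
    exact h1.comp (differentiable_id.prodMk (differentiable_const s))
  exact (hdiff y).hasDerivAt

/-- if `(a,b,c,q,r)` solves the first negative AKNS flow with
`a² + bc = 1`, and `f` satisfies `2a = b e^{-f} - c e^{f}` with
`b e^{-f} + c e^{f}` never zero, then `f_y = q e^{-f} + r e^{f}`. -/
theorem f_y_formula
    (a b c q r f : ℝ → ℝ → ℝ)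
    (ha : Smooth2 a) (hb : Smooth2 b) (hc : Smooth2 c)
    (hq : Smooth2 q) (hr : Smooth2 r) (hf : Smooth2 f)
    (hflow : AKNSNegFlow a b c q r)
    (hkk : ∀ y s, (a y s) ^ 2 + b y s * c y s = 1)
    (hff : ∀ y s, 2 * a y s
        = b y s * Real.exp (-(f y s)) - c y s * Real.exp (f y s))
    (hne : ∀ y s, b y s * Real.exp (-(f y s)) + c y s * Real.exp (f y s) ≠ 0) :
    ∀ y s, pdy f y s = q y s * Real.exp (-(f y s)) + r y s * Real.exp (f y s) := by
  intro y s
  obtain ⟨h1, h2, h3, h4, h5⟩ := hflow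
  have Ha := hasDerivAtY a ha y s
  have Hb := hasDerivAtY b hb y s
  have Hc := hasDerivAtY c hc y s
  have Hf := hasDerivAtY f hf y s
  -- derivative of the RHS
  have Hem : HasDerivAt (fun y' => Real.exp (-(f y' s)))
      (Real.exp (-(f y s)) * (-(pdy f y s))) y := Hf.neg.exp
  have Hep : HasDerivAt (fun y' => Real.exp (f y' s))
      (Real.exp (f y s) * (pdy f y s)) y := Hf.exp
  have HR : HasDerivAt (fun y' => b y' s * Real.exp (-(f y' s)) - c y' s * Real.exp (f y' s))
      (pdy b y s * Real.exp (-(f y s)) + b y s * (Real.exp (-(f y s)) * (-(pdy f y s)))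
        - (pdy c y s * Real.exp (f y s) + c y s * (Real.exp (f y s) * (pdy f y s)))) y :=
    (Hb.mul Hem).sub (Hc.mul Hep)
  have HL : HasDerivAt (fun y' => 2 * a y' s) (2 * pdy a y s) y := Ha.const_mul 2
  have hfun : (fun y' => 2 * a y' s)
      = (fun y' => b y' s * Real.exp (-(f y' s)) - c y' s * Real.exp (f y' s)) :=
    funext fun y' => hff y' s
  have H : 2 * pdy a y s
      = pdy b y s * Real.exp (-(f y s)) + b y s * (Real.exp (-(f y s)) * (-(pdy f y s)))
        - (pdy c y s * Real.exp (f y s) + c y s * (Real.exp (f y s) * (pdy f y s))) := by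
    have := (hfun ▸ HL).unique HR
    exact this
  set D := pdy f y s
  set Em := Real.exp (-(f y s))
  set Ep := Real.exp (f y s)
  have h5' := h5 y s
  have h3' := h3 y s
  have h4' := h4 y s
  have hff' := hff y s
  have hEE : Ep * Em = 1 := by
    rw [← Real.exp_add]; simp
  have hS := hne y s
  have hzero : (D - (q y s * Em + r y s * Ep)) * (b y s * Em + c y s * Ep) = 0 := by
    linear_combination H + Em * h3' - Ep * h4' - 2 * h5'
      + (q y s * Em - r y s * Ep) * hff' - 2 * (c y s * q y s + b y s * r y s) * hEE
  have := mul_eq_zero.mp hzero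
  rcases this with h | h
  · linarith [h]
  · exact absurd h hS
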